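/- arXiv:2508.09701 — 7 statements merged into one kernel-verified Lean document; each statement's English description precedes it below -/
import Mathlib

section
/- Let T be a 2-isometry, u,v nonzero with ‖v‖=1, K = u⊗v, and suppose T̃ := T + K is a 2-isometry. Then for every x ∈ ker K (= v^⊥), 2 Re⟨KTx, T²x⟩ + ‖KTx‖² = 0. -/
/-!
A 2-isometry `S` satisfies `‖x‖² - 2‖Sx‖² + ‖S²x‖² = 0`. For `x ∈ ker K` we have `(T + K)x = Tx`
and `(T + K)²x = T²x + KTx`, so comparing this identity for `T` and for `T + K` at `x` gives
`‖T²x + KTx‖² = ‖T²x‖²`; expanding the left side is the claim.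
-/

open ContinuousLinearMap

variable {H : Type*} [NormedAddCommGroup H] [InnerProductSpace ℂ H] [CompleteSpace H]

/-- The rank-one operator `u ⊗ v`, defined by `(u ⊗ v) h = ⟨h, v⟩ u`. -/
noncomputable def rankOne (u v : H) : H →L[ℂ] H := (innerSL ℂ v).smulRight u

/-- `Δ₂(T) = I - 2 T*T + T*²T²`. -/
noncomputable def Delta2 (T : H →L[ℂ] H) : H →L[ℂ] H :=
  1 - 2 • (ContinuousLinearMap.adjoint T ∘L T)
    + ContinuousLinearMap.adjoint (T ∘L T) ∘L (T ∘L T)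

lemma re_inner_delta2_apply (T : H →L[ℂ] H) (x : H) :
    (inner ℂ x (Delta2 T x)).re = ‖x‖ ^ 2 - 2 * ‖T x‖ ^ 2 + ‖T (T x)‖ ^ 2 := by
  rw [← RCLike.re_to_complex]
  simp only [Delta2, add_apply, sub_apply, one_apply_eq_self, comp_apply, two_smul,
    inner_add_right, inner_sub_right, adjoint_inner_right, map_add, map_sub, inner_self_eq_norm_sq]
  ring

lemma norm_sq_identity_of_delta2_eq_zero {T : H →L[ℂ] H}
    (hT : Delta2 T = 0) (x : H) : ‖x‖ ^ 2 - 2 * ‖T x‖ ^ 2 + ‖T (T x)‖ ^ 2 = 0 := by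
  simpa [hT] using (re_inner_delta2_apply T x).symm

theorem stmt_5_general (T : H →L[ℂ] H) (hT : Delta2 T = 0) (u v : H)
    (K : H →L[ℂ] H) (hK : K = rankOne u v)
    (hTt : Delta2 (T + K) = 0) :
    ∀ x : H, (inner ℂ v x : ℂ) = 0 →
      2 * (inner ℂ (K (T x)) (T (T x)) : ℂ).re + ‖K (T x)‖ ^ 2 = 0 := by
  intro x hx
  have hKx : K x = 0 := by simp [hK, rankOne, hx]
  have hT_x := norm_sq_identity_of_delta2_eq_zero hT x
  have hTK_x := norm_sq_identity_of_delta2_eq_zero hTt x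
  simp only [add_apply, hKx, add_zero, add_comm (T (T x))] at hTK_x
  have hexpand := norm_add_sq (𝕜 := ℂ) (K (T x)) (T (T x))
  rw [RCLike.re_to_complex] at hexpand
  linarith

theorem stmt_5 (T : H →L[ℂ] H) (hT : Delta2 T = 0) (u v : H) (hu : u ≠ 0) (hv : v ≠ 0)
    (hv1 : ‖v‖ = 1) (K : H →L[ℂ] H) (hK : K = rankOne u v)
    (hTt : Delta2 (T + K) = 0) :
    ∀ x : H, (inner ℂ v x : ℂ) = 0 →
      2 * (inner ℂ (K (T x)) (T (T x)) : ℂ).re + ‖K (T x)‖ ^ 2 = 0 :=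
  stmt_5_general T hT u v K hK hTt
end

section
/- Let T be a 2-isometry, u,v nonzero with ‖v‖=1, K = u⊗v, T̃ = T + K. For x ∈ v^⊥ with α := ⟨Tx, v⟩ ≠ 0, write Tx = u₁ + αv with u₁ ∈ v^⊥ and set β := ⟨Tu₁, u⟩/‖u‖². Then ⟨Δ₂(T̃)x, x⟩ = |α|² ( 2 Re( (conj β / conj α)‖u‖² + ⟨u, Tv⟩ ) + ‖u‖² ). -/
open ContinuousLinearMap

variable {H : Type*} [NormedAddCommGroup H] [InnerProductSpace ℂ H] [CompleteSpace H]

/-! Since `x ⊥ v`, the perturbation leaves `T x` unchanged and shifts `T² x` by `α u`, so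
`⟨Δ₂(T + K) x, x⟩ = ⟨Δ₂(T) x, x⟩ + ‖T² x + α u‖² - ‖T² x‖² = 2 Re ⟨T² x, α u⟩ + |α|² ‖u‖²`,
as `Δ₂(T) = 0`. Writing `T² x = T u₁ + α T v` expresses `⟨T² x, u⟩` through `β` and `⟨T v, u⟩`. -/

open scoped ComplexConjugate

lemma inner_Delta2_apply_self (S : H →L[ℂ] H) (y : H) :
    inner ℂ (Delta2 S y) y = ((‖y‖ ^ 2 - 2 * ‖S y‖ ^ 2 + ‖S (S y)‖ ^ 2 : ℝ) : ℂ) := by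
  simp only [Delta2, add_apply, sub_apply, two_smul, one_apply_eq_self, comp_apply,
    inner_add_left, inner_sub_left, adjoint_inner_left, inner_self_eq_norm_sq_to_K,
    Complex.coe_algebraMap]
  push_cast
  ring

section RankOnePerturbation

omit [CompleteSpace H]

variable (T : H →L[ℂ] H) (u v : H) {x : H}

lemma rankOne_apply (h : H) : rankOne u v h = inner ℂ v h • u := rfl

lemma add_rankOne_apply_of_inner_eq_zero (hx : inner ℂ v x = 0) :
    (T + rankOne u v) x = T x := by
  simp [rankOne_apply, hx]

lemma add_rankOne_apply_apply_of_inner_eq_zero (hx : inner ℂ v x = 0) :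
    (T + rankOne u v) ((T + rankOne u v) x) = T (T x) + inner ℂ v (T x) • u := by
  rw [add_rankOne_apply_of_inner_eq_zero T u v hx, add_apply, rankOne_apply]

end RankOnePerturbation

lemma inner_Delta2_add_rankOne_apply_self (T : H →L[ℂ] H) (u v : H) {x : H}
    (hx : inner ℂ v x = 0) :
    inner ℂ (Delta2 (T + rankOne u v) x) x = inner ℂ (Delta2 T x) x
      + ((2 * RCLike.re (inner ℂ (T (T x)) (inner ℂ v (T x) • u))
          + ‖inner ℂ v (T x) • u‖ ^ 2 : ℝ) : ℂ) := by
  rw [inner_Delta2_apply_self, inner_Delta2_apply_self,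
    add_rankOne_apply_apply_of_inner_eq_zero T u v hx,
    add_rankOne_apply_of_inner_eq_zero T u v hx, norm_add_sq (𝕜 := ℂ)]
  push_cast
  ring

lemma Complex.norm_sq_mul_div_conj (α z : ℂ) : (‖α‖ ^ 2 : ℂ) * (z / conj α) = α * z := by
  rcases eq_or_ne α 0 with rfl | hα
  · simp
  · rw [← Complex.mul_conj', mul_assoc, mul_div_cancel₀ _ ((map_ne_zero _).mpr hα)]

theorem stmt_9_general (T : H →L[ℂ] H) (hT : Delta2 T = 0) (u v : H)
    (K : H →L[ℂ] H) (hK : K = rankOne u v)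
    (x : H) (hx : (inner ℂ v x : ℂ) = 0)
    (α : ℂ) (hα : α = (inner ℂ v (T x) : ℂ))
    (u₁ : H) (hu₁ : T x = u₁ + α • v)
    (β : ℂ) (hβ : β = (inner ℂ u (T u₁) : ℂ) / (‖u‖ ^ 2 : ℂ)) :
    (inner ℂ (Delta2 (T + K) x) x : ℂ) =
      ((‖α‖ ^ 2 *
        (2 * ((starRingEnd ℂ β / starRingEnd ℂ α) * (‖u‖ ^ 2 : ℂ)
              + (inner ℂ (T v) u : ℂ)).re
          + ‖u‖ ^ 2) : ℝ) : ℂ) := by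
  have hβu : conj β * (‖u‖ ^ 2 : ℂ) = inner ℂ (T u₁) u := by
    rw [hβ, map_div₀, inner_conj_symm, map_pow, Complex.conj_ofReal]
    refine div_mul_cancel_of_imp fun hu => ?_
    obtain rfl : u = 0 := by simpa using hu
    exact inner_zero_right _
  have hcross : inner ℂ (T (T x)) (α • u)
      = ‖α‖ ^ 2 * ((conj β / conj α) * (‖u‖ ^ 2 : ℂ) + inner ℂ (T v) u) := by
    rw [hu₁, map_add, map_smul, inner_smul_right, inner_add_left, inner_smul_left, ← hβu,
      mul_add, mul_add, div_mul_eq_mul_div, Complex.norm_sq_mul_div_conj, ← Complex.mul_conj']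
    ring
  rw [hK, inner_Delta2_add_rankOne_apply_self T u v hx, ← hα, hT, zero_apply, inner_zero_left,
    zero_add, hcross, norm_smul]
  norm_cast
  rw [RCLike.re_to_complex, Complex.re_ofReal_mul]
  ring

theorem stmt_9 (T : H →L[ℂ] H) (hT : Delta2 T = 0) (u v : H) (hu : u ≠ 0) (hv : v ≠ 0)
    (hv1 : ‖v‖ = 1) (K : H →L[ℂ] H) (hK : K = rankOne u v)
    (x : H) (hx : (inner ℂ v x : ℂ) = 0)
    (α : ℂ) (hα : α = (inner ℂ v (T x) : ℂ)) (hα0 : α ≠ 0)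
    (u₁ : H) (hu₁ : T x = u₁ + α • v) (hu₁mem : (inner ℂ v u₁ : ℂ) = 0)
    (β : ℂ) (hβ : β = (inner ℂ u (T u₁) : ℂ) / (‖u‖ ^ 2 : ℂ)) :
    (inner ℂ (Delta2 (T + K) x) x : ℂ) =
      ((‖α‖ ^ 2 *
        (2 * ((starRingEnd ℂ β / starRingEnd ℂ α) * (‖u‖ ^ 2 : ℂ)
              + (inner ℂ (T v) u : ℂ)).re
          + ‖u‖ ^ 2) : ℝ) : ℂ) :=
  stmt_9_general T hT u v K hK x hx α hα u₁ hu₁ β hβ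
end

section
/- Main theorem (sufficiency, case (i)): Let T be a 2-isometry, u,v nonzero with ‖v‖=1, K = u⊗v, and suppose Δ₂(T+K)v = 0 and v^⊥ is invariant under T. Then T + K is a 2-isometry. -/
open ContinuousLinearMap

variable {H : Type*} [NormedAddCommGroup H] [InnerProductSpace ℂ H] [CompleteSpace H]

/-!
`S = T + K` agrees with `T` on `v^⊥`, which `T` leaves invariant, so the sesquilinear form
`⟪x, Δ₂(S) y⟫ = ⟪x, y⟫ - 2⟪Sx, Sy⟫ + ⟪S²x, S²y⟫` coincides with that of `Δ₂(T) = 0` on `v^⊥`.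
Since `Δ₂(S)` is self-adjoint and kills `v`, its form also vanishes whenever one argument
lies in `ℂ v`; by `H = ℂ v ⊕ v^⊥` the form, hence `Δ₂(S)`, is zero.
-/

open scoped InnerProductSpace

theorem LinearMap.IsSymmetric.eq_zero_of_eqOn_zero_of_inner_orthogonal_eq_zero
    {𝕜 E : Type*} [RCLike 𝕜] [NormedAddCommGroup E] [InnerProductSpace 𝕜 E]
    {A : E →ₗ[𝕜] E} (hA : A.IsSymmetric) (K : Submodule 𝕜 E) [K.HasOrthogonalProjection]
    (hK : Set.EqOn A 0 K) (hKperp : ∀ x ∈ Kᗮ, ∀ y ∈ Kᗮ, ⟪x, A y⟫_𝕜 = 0) : A = 0 := by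
  ext y
  obtain ⟨y₁, hy₁, y₂, hy₂, rfl⟩ := K.exists_add_mem_mem_orthogonal y
  refine ext_inner_left 𝕜 fun x ↦ ?_
  obtain ⟨x₁, hx₁, x₂, hx₂, rfl⟩ := K.exists_add_mem_mem_orthogonal x
  rw [map_add, hK hy₁, Pi.zero_apply, zero_add, inner_add_left, ← hA, hK hx₁, Pi.zero_apply,
    inner_zero_left, hKperp x₂ hx₂ y₂ hy₂, LinearMap.zero_apply, inner_zero_right, add_zero]

theorem inner_delta2_apply (S : H →L[ℂ] H) (x y : H) :
    ⟪x, Delta2 S y⟫_ℂ = ⟪x, y⟫_ℂ - 2 * ⟪S x, S y⟫_ℂ + ⟪S (S x), S (S y)⟫_ℂ := by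
  simp [Delta2, adjoint_inner_right, two_mul]

theorem isSelfAdjoint_delta2 (S : H →L[ℂ] H) : IsSelfAdjoint (Delta2 S) := by
  have hS := IsSelfAdjoint.star_mul_self S
  rw [Delta2, two_smul]
  exact ((IsSelfAdjoint.one _).sub (hS.add hS)).add (IsSelfAdjoint.star_mul_self (S * S))

theorem inner_delta2_eq_of_eqOn_of_mapsTo {S T : H →L[ℂ] H} {M : Submodule ℂ H}
    (hST : Set.EqOn S T M) (hTM : Set.MapsTo T M M) {x y : H} (hx : x ∈ M) (hy : y ∈ M) :
    ⟪x, Delta2 S y⟫_ℂ = ⟪x, Delta2 T y⟫_ℂ := by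
  rw [inner_delta2_apply, inner_delta2_apply, hST hx, hST hy, hST (hTM hx), hST (hTM hy)]

theorem stmt_10_general (T : H →L[ℂ] H) (hT : Delta2 T = 0) (u v : H)
    (K : H →L[ℂ] H) (hK : K = rankOne u v)
    (hvker : Delta2 (T + K) v = 0)
    (hinv : ∀ x : H, (inner ℂ v x : ℂ) = 0 → (inner ℂ v (T x) : ℂ) = 0) :
    Delta2 (T + K) = 0 := by
  have hTv : Set.MapsTo T (ℂ ∙ v)ᗮ (ℂ ∙ v)ᗮ := by
    simpa only [Set.MapsTo, SetLike.mem_coe, Submodule.mem_orthogonal_singleton_iff_inner_right]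
      using hinv
  have hSv : Set.EqOn (T + K) T (ℂ ∙ v)ᗮ := by
    intro x hx
    rw [SetLike.mem_coe, Submodule.mem_orthogonal_singleton_iff_inner_right] at hx
    simp [hK, rankOne, hx]
  refine coe_injective <| (isSelfAdjoint_delta2 _).isSymmetric
    |>.eq_zero_of_eqOn_zero_of_inner_orthogonal_eq_zero (ℂ ∙ v) ?_ fun x hx y hy ↦ ?_
  · rintro _ hx
    obtain ⟨c, rfl⟩ := Submodule.mem_span_singleton.mp hx
    simp [hvker]
  · rw [coe_coe, inner_delta2_eq_of_eqOn_of_mapsTo hSv hTv hx hy, hT, zero_apply, inner_zero_right]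

theorem stmt_10 (T : H →L[ℂ] H) (hT : Delta2 T = 0) (u v : H) (hu : u ≠ 0) (hv : v ≠ 0)
    (hv1 : ‖v‖ = 1) (K : H →L[ℂ] H) (hK : K = rankOne u v)
    (hvker : Delta2 (T + K) v = 0)
    (hinv : ∀ x : H, (inner ℂ v x : ℂ) = 0 → (inner ℂ v (T x) : ℂ) = 0) :
    Delta2 (T + K) = 0 :=
  stmt_10_general T hT u v K hK hvker hinv
end

section
/- Main theorem (sufficiency, case (ii)): Let T be a 2-isometry, u,v nonzero with ‖v‖=1, K = u⊗v, T̃ = T + K, S = {x ∈ ker K : Tx ∈ ker K}, and suppose S ≠ ker K. Assume: Δ₂(T̃)v = 0; Δ₂(T̃)(S) ⊆ S; and ‖u‖² = −2(γ + Re⟨u, Tv⟩), where γ = Re( ⟨T* P_{ker K} T* u, x⟩ / ⟨T*v, x⟩ ) for some (equivalently every) nonzero x ∈ S^⊥ ∩ ker K. Then T̃ is a 2-isometry. -/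
open ContinuousLinearMap

variable {H : Type*} [NormedAddCommGroup H] [InnerProductSpace ℂ H] [CompleteSpace H]

/-!
Write `D = Δ₂(T + K)`, a self-adjoint operator, and let `w` be the projection of `T* v` onto
`v^⊥`; then `S = (span {v, w})ᗮ`. On `S` the operator `T + K` agrees with `T` up to second
order, so `⟪D x, y⟫ = ⟪Δ₂(T) x, y⟫ = 0` for `x, y ∈ S`; as `D S ⊆ S`, `D` vanishes on `S`.
The conditions on `γ` and `‖u‖` say exactly that `⟪D w, w⟫ = 0`; together with `D v = 0` this
puts `D w` in `S`, so `‖D w‖² = ⟪w, D² w⟫ = 0`. Hence `D` vanishes on `span {v, w}` and on its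
orthogonal complement.
-/

local notation "⟪" x ", " y "⟫" => @inner ℂ _ _ x y

open ComplexConjugate

theorem Complex.re_mul_eq_sq_norm_mul_re_div_conj (a z : ℂ) :
    (a * z).re = ‖a‖ ^ 2 * (z / conj a).re := by
  rcases eq_or_ne a 0 with rfl | ha
  · simp
  have : conj a ≠ 0 := (map_ne_zero _).2 ha
  rw [← Complex.re_ofReal_mul, Complex.ofReal_pow, ← Complex.mul_conj']
  field_simp

section InnerProductSpace

variable {E : Type*} [NormedAddCommGroup E] [InnerProductSpace ℂ E]

theorem Submodule.mem_orthogonal_span_pair_iff {a b x : E} :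
    x ∈ (span ℂ {a, b})ᗮ ↔ ⟪a, x⟫ = 0 ∧ ⟪b, x⟫ = 0 := by
  rw [span_insert, ← inf_orthogonal, mem_inf, mem_orthogonal_singleton_iff_inner_right,
    mem_orthogonal_singleton_iff_inner_right]

theorem ContinuousLinearMap.eq_zero_of_forall_mem_of_forall_mem_orthogonal
    {F : Type*} [TopologicalSpace F] [AddCommGroup F] [Module ℂ F]
    (M : Submodule ℂ E) [M.HasOrthogonalProjection] {f : E →L[ℂ] F}
    (h₁ : ∀ x ∈ M, f x = 0) (h₂ : ∀ x ∈ Mᗮ, f x = 0) : f = 0 := by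
  have hker : M ⊔ Mᗮ ≤ LinearMap.ker (f : E →ₗ[ℂ] F) := sup_le h₁ h₂
  rw [Submodule.sup_orthogonal_of_hasOrthogonalProjection, top_le_iff, LinearMap.ker_eq_top] at hker
  exact coe_injective hker

theorem Submodule.coe_orthogonalProjectionOnto_orthogonal_singleton {v : E} (hv : ‖v‖ = 1) (y : E) :
    ((ℂ ∙ v)ᗮ.orthogonalProjectionOnto y : E) = y - ⟪v, y⟫ • v := by
  rw [coe_orthogonalProjectionOnto_apply, starProjection_orthogonal_val,
    starProjection_singleton, hv]
  norm_num

theorem rankOne_apply_s11 (u v x : E) : rankOne u v x = ⟪v, x⟫ • u := rfl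

theorem rankOne_apply_eq_zero_iff {u v x : E} (hu : u ≠ 0) : rankOne u v x = 0 ↔ ⟪v, x⟫ = 0 := by
  simp [rankOne_apply_s11, hu]

theorem ker_rankOne {u v : E} (hu : u ≠ 0) :
    LinearMap.ker (rankOne u v : E →ₗ[ℂ] E) = (ℂ ∙ v)ᗮ := by
  ext x
  rw [LinearMap.mem_ker, coe_coe, rankOne_apply_eq_zero_iff hu,
    Submodule.mem_orthogonal_singleton_iff_inner_right]

variable [CompleteSpace E]

theorem IsSelfAdjoint.eq_zero_of_forall_mem_orthogonal_span_pair {D : E →L[ℂ] E}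
    (hD : IsSelfAdjoint D) {v w : E} (hM : ∀ x ∈ (Submodule.span ℂ {v, w})ᗮ, D x = 0)
    (hv : D v = 0) (hw : ⟪D w, w⟫ = 0) : D = 0 := by
  have hsymm : ∀ x y, ⟪D x, y⟫ = ⟪x, D y⟫ := hD.isSymmetric
  have hDw_mem : D w ∈ (Submodule.span ℂ {v, w})ᗮ := by
    rw [Submodule.mem_orthogonal_span_pair_iff, ← hsymm, ← hsymm, hv, inner_zero_left, hw]
    exact ⟨rfl, rfl⟩
  have hDw : D w = 0 := by
    rw [← inner_self_eq_zero (𝕜 := ℂ), hsymm, hM _ hDw_mem, inner_zero_right]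
  have : FiniteDimensional ℂ (Submodule.span ℂ {v, w}) :=
    FiniteDimensional.span_of_finite ℂ (Set.toFinite _)
  refine eq_zero_of_forall_mem_of_forall_mem_orthogonal _ (fun x hx => ?_) hM
  refine Submodule.span_le (p := LinearMap.ker (D : E →ₗ[ℂ] E)).2 ?_ hx
  simp [Set.insert_subset_iff, hv, hDw]

end InnerProductSpace

section Delta2

variable (A : H →L[ℂ] H)

theorem Delta2_apply (x : H) :
    Delta2 A x = x - 2 • adjoint A (A x) + adjoint A (adjoint A (A (A x))) := by
  simp [Delta2, adjoint_comp]

theorem inner_Delta2_left (x y : H) :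
    ⟪Delta2 A x, y⟫ = ⟪x, y⟫ - 2 * ⟪A x, A y⟫ + ⟪A (A x), A (A y)⟫ := by
  simp only [Delta2_apply, inner_add_left, inner_sub_left, two_smul, adjoint_inner_left]
  ring

theorem isSelfAdjoint_Delta2 : IsSelfAdjoint (Delta2 A) := by
  rw [isSelfAdjoint_iff_isSymmetric]
  intro x y
  rw [coe_coe, ← inner_conj_symm x, inner_Delta2_left, inner_Delta2_left]
  simp only [map_add, map_sub, map_mul, inner_conj_symm, map_ofNat]

theorem inner_Delta2_self (x : H) :
    ⟪Delta2 A x, x⟫ = ((‖x‖ ^ 2 - 2 * ‖A x‖ ^ 2 + ‖A (A x)‖ ^ 2 : ℝ) : ℂ) := by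
  simp only [inner_Delta2_left, inner_self_eq_norm_sq_to_K]
  push_cast
  rfl

theorem inner_Delta2_left_eq {A B : H →L[ℂ] H} {x y : H} (hx : A x = B x) (hAx : A (A x) = B (B x))
    (hy : A y = B y) (hAy : A (A y) = B (B y)) : ⟪Delta2 A x, y⟫ = ⟪Delta2 B x, y⟫ := by
  rw [inner_Delta2_left, inner_Delta2_left, hAx, hAy, hx, hy]

end Delta2

theorem Delta2_add_apply_eq_zero_of_mem {T K : H →L[ℂ] H} (hT : Delta2 T = 0) {S : Submodule ℂ H}
    (hK : ∀ x ∈ S, K x = 0 ∧ K (T x) = 0) (hinv : ∀ x ∈ S, Delta2 (T + K) x ∈ S) :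
    ∀ x ∈ S, Delta2 (T + K) x = 0 := by
  have hagree : ∀ x ∈ S, (T + K) x = T x ∧ (T + K) ((T + K) x) = T (T x) := fun x hx => by
    simp [(hK x hx).1, (hK x hx).2]
  intro x hx
  have hDx := hinv x hx
  rw [← inner_self_eq_zero (𝕜 := ℂ), inner_Delta2_left_eq (hagree x hx).1 (hagree x hx).2
    (hagree _ hDx).1 (hagree _ hDx).2, hT, zero_apply, inner_zero_left]

section RankOnePerturbation

variable {T : H →L[ℂ] H} {u v : H}

theorem mem_orthogonal_span_pair_iff_rankOne (hu : u ≠ 0) {x : H} :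
    x ∈ (Submodule.span ℂ {v, ((ℂ ∙ v)ᗮ.orthogonalProjectionOnto (adjoint T v) : H)})ᗮ ↔
      rankOne u v x = 0 ∧ rankOne u v (T x) = 0 := by
  rw [Submodule.mem_orthogonal_span_pair_iff, rankOne_apply_eq_zero_iff hu,
    rankOne_apply_eq_zero_iff hu, ← adjoint_inner_left]
  refine and_congr_right fun hx => ?_
  have hx' : x ∈ (ℂ ∙ v)ᗮ := Submodule.mem_orthogonal_singleton_iff_inner_right.2 hx
  change ⟪_, ((⟨x, hx'⟩ : (ℂ ∙ v)ᗮ) : H)⟫ = 0 ↔ _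
  rw [← Submodule.coe_inner, Submodule.inner_orthogonalProjectionOnto_eq_of_mem_right]

theorem inner_adjoint_orthogonalProjectionOnto_adjoint (hv : ‖v‖ = 1) (x : H) :
    ⟪x, adjoint T ((ℂ ∙ v)ᗮ.orthogonalProjectionOnto (adjoint T u) : H)⟫ =
      ⟪T (T x), u⟫ - ⟪T x, v⟫ * ⟪T v, u⟫ := by
  rw [Submodule.coe_orthogonalProjectionOnto_orthogonal_singleton hv, adjoint_inner_right,
    inner_sub_right, inner_smul_right, adjoint_inner_right, adjoint_inner_right, mul_comm]

theorem inner_Delta2_add_rankOne_self (hT : Delta2 T = 0) {x : H} (hx : ⟪v, x⟫ = 0) :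
    ⟪Delta2 (T + rankOne u v) x, x⟫ = ((‖T (T x) + ⟪v, T x⟫ • u‖ ^ 2 - ‖T (T x)‖ ^ 2 : ℝ) : ℂ) := by
  have hT0 := inner_Delta2_self T x
  rw [hT, zero_apply, inner_zero_left, eq_comm, Complex.ofReal_eq_zero] at hT0
  rw [inner_Delta2_self]
  simp only [add_apply, rankOne_apply_s11, hx, zero_smul, add_zero]
  congr 1
  linarith

theorem inner_Delta2_add_rankOne_self_eq_zero (hT : Delta2 T = 0) (hv : ‖v‖ = 1) {γ : ℝ}
    (hnorm : ‖u‖ ^ 2 = -2 * (γ + ⟪T v, u⟫.re)) {x : H} (hx : ⟪v, x⟫ = 0)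
    (hγ : (⟪x, adjoint T ((ℂ ∙ v)ᗮ.orthogonalProjectionOnto (adjoint T u) : H)⟫ /
      ⟪x, adjoint T v⟫).re = γ) :
    ⟪Delta2 (T + rankOne u v) x, x⟫ = 0 := by
  rw [inner_Delta2_add_rankOne_self hT hx, Complex.ofReal_eq_zero]
  set a := ⟪v, T x⟫
  rcases eq_or_ne a 0 with ha | ha
  · simp [ha]
  have hTx : ⟪T x, v⟫ = conj a := (inner_conj_symm _ _).symm
  rw [inner_adjoint_orthogonalProjectionOnto_adjoint hv, adjoint_inner_right, hTx, sub_div,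
    mul_div_cancel_left₀ _ ((map_ne_zero _).2 ha), Complex.sub_re] at hγ
  rw [norm_add_sq (𝕜 := ℂ), inner_smul_right, RCLike.re_to_complex,
    Complex.re_mul_eq_sq_norm_mul_re_div_conj, norm_smul, mul_pow]
  linear_combination 2 * ‖a‖ ^ 2 * hγ + ‖a‖ ^ 2 * hnorm

end RankOnePerturbation

theorem stmt_11_general (T : H →L[ℂ] H) (hT : Delta2 T = 0) (u v : H) (hu : u ≠ 0)
    (hv1 : ‖v‖ = 1) (K : H →L[ℂ] H) (hK : K = rankOne u v)
    (S : Submodule ℂ H) (hS : ∀ x : H, x ∈ S ↔ K x = 0 ∧ K (T x) = 0)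
    (hSne : S ≠ LinearMap.ker (K : H →ₗ[ℂ] H))
    (hvker : Delta2 (T + K) v = 0)
    (hinv : ∀ x ∈ S, Delta2 (T + K) x ∈ S)
    (γ : ℝ)
    (hγ : ∀ x ∈ Sᗮ ⊓ LinearMap.ker (K : H →ₗ[ℂ] H), x ≠ 0 →
      ((inner ℂ x (ContinuousLinearMap.adjoint T
          ((Submodule.orthogonalProjectionOnto (ℂ ∙ v)ᗮ (ContinuousLinearMap.adjoint T u) : H))) : ℂ) /
        (inner ℂ x (ContinuousLinearMap.adjoint T v) : ℂ)).re = γ)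
    (hnorm : ‖u‖ ^ 2 = -2 * (γ + (inner ℂ (T v) u : ℂ).re)) :
    Delta2 (T + K) = 0 := by
  subst hK
  set w : H := ((ℂ ∙ v)ᗮ.orthogonalProjectionOnto (adjoint T v) : H)
  have hvw : ⟪v, w⟫ = 0 := Submodule.mem_orthogonal_singleton_iff_inner_right.1 (Subtype.property _)
  have hSw : S = (Submodule.span ℂ {v, w})ᗮ := by
    ext x
    rw [hS, mem_orthogonal_span_pair_iff_rankOne hu]
  have hw0 : w ≠ 0 := by
    intro hw
    rw [hSw, hw, Set.pair_comm, Submodule.span_insert_zero, ← ker_rankOne hu] at hSne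
    exact hSne rfl
  have hwS : w ∈ Sᗮ := hSw ▸ Submodule.le_orthogonal_orthogonal _ (Submodule.subset_span (by simp))
  refine (isSelfAdjoint_Delta2 _).eq_zero_of_forall_mem_orthogonal_span_pair (w := w) ?_ hvker ?_
  · rw [← hSw]
    exact Delta2_add_apply_eq_zero_of_mem hT (fun x hx => (hS x).1 hx) hinv
  · refine inner_Delta2_add_rankOne_self_eq_zero hT hv1 hnorm hvw (hγ w ⟨hwS, ?_⟩ hw0)
    rw [ker_rankOne hu]
    exact Subtype.property _

theorem stmt_11 (T : H →L[ℂ] H) (hT : Delta2 T = 0) (u v : H) (hu : u ≠ 0) (hv : v ≠ 0)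
    (hv1 : ‖v‖ = 1) (K : H →L[ℂ] H) (hK : K = rankOne u v)
    (S : Submodule ℂ H) (hS : ∀ x : H, x ∈ S ↔ K x = 0 ∧ K (T x) = 0)
    (hSne : S ≠ LinearMap.ker (K : H →ₗ[ℂ] H))
    (hvker : Delta2 (T + K) v = 0)
    (hinv : ∀ x ∈ S, Delta2 (T + K) x ∈ S)
    (γ : ℝ)
    (hγ : ∀ x ∈ Sᗮ ⊓ LinearMap.ker (K : H →ₗ[ℂ] H), x ≠ 0 →
      ((inner ℂ x (ContinuousLinearMap.adjoint T
          ((Submodule.orthogonalProjectionOnto (ℂ ∙ v)ᗮ (ContinuousLinearMap.adjoint T u) : H))) : ℂ) /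
        (inner ℂ x (ContinuousLinearMap.adjoint T v) : ℂ)).re = γ)
    (hnorm : ‖u‖ ^ 2 = -2 * (γ + (inner ℂ (T v) u : ℂ).re)) :
    Delta2 (T + K) = 0 :=
  stmt_11_general T hT u v hu hv1 K hK S hS hSne hvker hinv γ hγ hnorm
end

section
/- Main theorem (necessity): Let T be a 2-isometry, u,v nonzero with ‖v‖=1, K = u⊗v, S = {x ∈ ker K : Tx ∈ ker K}, and suppose T̃ := T + K is a 2-isometry and S ≠ ker K. Then for every nonzero x ∈ S^⊥ ∩ ker K, Re( ⟨T* P_{ker K} T* u, x⟩ / ⟨T*v, x⟩ ) = (−‖u‖² − 2Re⟨u, Tv⟩)/2. -/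
open ContinuousLinearMap

variable {H : Type*} [NormedAddCommGroup H] [InnerProductSpace ℂ H] [CompleteSpace H]

/-!
A nonzero `x ∈ Sᗮ ∩ ker K` has `c := ⟨v, T x⟩ ≠ 0`, since otherwise `x ∈ S`. As `K x = 0`, the
2-isometries `T` and `T + K` agree at `x`, so the 2-isometry identity
`‖A² x‖² = 2 ‖A x‖² - ‖x‖²` forces `‖T² x + c u‖ = ‖T² x‖`, i.e.
`2 Re (c ⟨T² x, u⟩) + |c|² ‖u‖² = 0`. Splitting `T x = c v + P_{v^⊥} T x` gives
`⟨T² x, u⟩ = ⟨x, T* P_{v^⊥} T* u⟩ + c̄ ⟨T v, u⟩`, and the denominator is `⟨x, T* v⟩ = c̄`.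
-/

open scoped InnerProductSpace ComplexConjugate

theorem Complex.re_div_conj (z w : ℂ) : (z / conj w).re = (w * z).re / Complex.normSq w := by
  by_cases hw : w = 0
  · simp [hw]
  · rw [← mul_div_mul_left z (conj w) hw, Complex.mul_conj, Complex.div_ofReal_re]

theorem rankOne_apply_s12 {E : Type*} [NormedAddCommGroup E] [InnerProductSpace ℂ E] (u v y : E) :
    rankOne u v y = ⟪v, y⟫_ℂ • u := rfl

theorem norm_sq_apply_apply_of_Delta2_eq_zero {A : H →L[ℂ] H} (hA : Delta2 A = 0) (h : H) :
    ‖A (A h)‖ ^ 2 = 2 * ‖A h‖ ^ 2 - ‖h‖ ^ 2 := by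
  have hzero : RCLike.re ⟪h, Delta2 A h⟫_ℂ = 0 := by simp [hA]
  simp only [Delta2, add_apply, sub_apply, one_apply_eq_self, coe_comp, Function.comp_apply,
    two_smul, inner_add_right, inner_sub_right, adjoint_inner_right, map_add, map_sub,
    inner_self_eq_norm_sq] at hzero
  linarith

theorem two_mul_re_inner_add_norm_sq_eq_zero_of_Delta2_add {A B : H →L[ℂ] H} (hA : Delta2 A = 0)
    (hAB : Delta2 (A + B) = 0) {h : H} (hBh : B h = 0) :
    2 * RCLike.re ⟪A (A h), B (A h)⟫_ℂ + ‖B (A h)‖ ^ 2 = 0 := by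
  have hsum := norm_sq_apply_apply_of_Delta2_eq_zero hAB h
  have hAh : (A + B) h = A h := by simp [hBh]
  rw [hAh, add_apply, norm_add_sq (𝕜 := ℂ), norm_sq_apply_apply_of_Delta2_eq_zero hA] at hsum
  linarith

theorem inner_adjoint_starProjection_orthogonal_singleton (T : H →L[ℂ] H) {v : H} (hv : ‖v‖ = 1)
    (x u : H) :
    ⟪x, adjoint T ((ℂ ∙ v)ᗮ.starProjection (adjoint T u))⟫_ℂ =
      ⟪T (T x), u⟫_ℂ - conj ⟪v, T x⟫_ℂ * ⟪T v, u⟫_ℂ := by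
  rw [adjoint_inner_right, ← Submodule.inner_starProjection_left_eq_right, adjoint_inner_right,
    Submodule.starProjection_orthogonal_val, Submodule.starProjection_unit_singleton ℂ hv,
    map_sub, map_smul, inner_sub_left, inner_smul_left]

theorem stmt_12_general (T : H →L[ℂ] H) (hT : Delta2 T = 0) (u v : H)
    (hv1 : ‖v‖ = 1) (K : H →L[ℂ] H) (hK : K = rankOne u v)
    (S : Submodule ℂ H) (hS : ∀ x : H, x ∈ S ↔ K x = 0 ∧ K (T x) = 0)
    (hTt : Delta2 (T + K) = 0) :
    ∀ x ∈ Sᗮ ⊓ LinearMap.ker (K : H →ₗ[ℂ] H), x ≠ 0 →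
      ((inner ℂ x (ContinuousLinearMap.adjoint T
          ((Submodule.orthogonalProjectionOnto (ℂ ∙ v)ᗮ (ContinuousLinearMap.adjoint T u) : H))) : ℂ) /
        (inner ℂ x (ContinuousLinearMap.adjoint T v) : ℂ)).re =
      (-‖u‖ ^ 2 - 2 * (inner ℂ (T v) u : ℂ).re) / 2 := by
  rintro x ⟨hxS, hxK⟩ hx0
  have hKx : K x = 0 := hxK
  subst hK
  have hc : Complex.normSq ⟪v, T x⟫_ℂ ≠ 0 := by
    refine Complex.normSq_eq_zero.not.mpr fun hc0 => hx0 ?_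
    have hxS_mem : x ∈ S := (hS x).mpr ⟨hKx, by rw [rankOne_apply_s12, hc0, zero_smul]⟩
    exact inner_self_eq_zero.mp ((Submodule.mem_orthogonal S x).mp hxS x hxS_mem)
  have key := two_mul_re_inner_add_norm_sq_eq_zero_of_Delta2_add hT hTt hKx
  rw [rankOne_apply_s12, inner_smul_right, norm_smul, mul_pow, Complex.sq_norm] at key
  rw [Submodule.coe_orthogonalProjectionOnto_apply,
    inner_adjoint_starProjection_orthogonal_singleton T hv1, adjoint_inner_right,
    ← inner_conj_symm (T x) v, Complex.re_div_conj, mul_sub, ← mul_assoc, Complex.mul_conj,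
    Complex.sub_re, Complex.re_ofReal_mul, sub_div, mul_div_cancel_left₀ _ hc]
  rw [RCLike.re_to_complex] at key
  field_simp
  linarith

theorem stmt_12 (T : H →L[ℂ] H) (hT : Delta2 T = 0) (u v : H) (hu : u ≠ 0) (hv : v ≠ 0)
    (hv1 : ‖v‖ = 1) (K : H →L[ℂ] H) (hK : K = rankOne u v)
    (S : Submodule ℂ H) (hS : ∀ x : H, x ∈ S ↔ K x = 0 ∧ K (T x) = 0)
    (hSne : S ≠ LinearMap.ker (K : H →ₗ[ℂ] H))
    (hTt : Delta2 (T + K) = 0) :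
    ∀ x ∈ Sᗮ ⊓ LinearMap.ker (K : H →ₗ[ℂ] H), x ≠ 0 →
      ((inner ℂ x (ContinuousLinearMap.adjoint T
          ((Submodule.orthogonalProjectionOnto (ℂ ∙ v)ᗮ (ContinuousLinearMap.adjoint T u) : H))) : ℂ) /
        (inner ℂ x (ContinuousLinearMap.adjoint T v) : ℂ)).re =
      (-‖u‖ ^ 2 - 2 * (inner ℂ (T v) u : ℂ).re) / 2 :=
  stmt_12_general T hT u v hv1 K hK S hS hTt
end

section
/- For α ∈ C, α ≠ 0, and n ≥ 0, the operator M_z + α zⁿ ⊗ 1 on the Dirichlet space is a 2-isometry if and only if n = 1 and |α|² = −2 Re(α). -/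
/-- The squared Dirichlet norm of a coefficient sequence: `‖Σ aₖ zᵏ‖² = Σ (k+1)|aₖ|²`. -/
noncomputable def Dnorm2 (a : ℕ → ℂ) : ℝ := ∑' k : ℕ, (k + 1 : ℝ) * ‖a k‖ ^ 2

/-- Membership in the Dirichlet space: `Σ (k+1)|aₖ|² < ∞`. -/
def DMem (a : ℕ → ℂ) : Prop := Summable fun k : ℕ => (k + 1 : ℝ) * ‖a k‖ ^ 2

/-- Multiplication by `z` on coefficient sequences. -/
def Mz (a : ℕ → ℂ) : ℕ → ℂ := fun k => if k = 0 then 0 else a (k - 1)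

/-!
The Dirichlet norm of `M_z a` exceeds that of `a` by the Hardy norm `Σ |aₖ|²`, which `M_z`
preserves; hence `M_z` is a 2-isometry. For `n = 1` the perturbation only multiplies `a₀` by
`1 + α` before shifting, so when `|1 + α| = 1` the coefficients of `A a` have the same moduli as
those of `M_z a`, and the Dirichlet norm sees only moduli. Conversely, the 2-isometry defect of
`A` at the constant `1` is `|α|⁴` for `n = 0`, `1 - |1 + α|²` for `n = 1` and `-n |α|²` for
`n ≥ 2`, while `|1 + α|² = 1 + 2 Re α + |α|²`.
-/

open Finset

lemma tsum_eq_tsum_succ_of_eq_zero {M : Type*} [AddCommMonoid M] [TopologicalSpace M]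
    {f : ℕ → M} (hf : f 0 = 0) : ∑' k, f k = ∑' k, f (k + 1) :=
  (tsum_pnat_eq_tsum_of_eq_zero hf).symm.trans tsum_pnat_eq_tsum_succ

section Mz

@[simp] lemma Mz_zero (a : ℕ → ℂ) : Mz a 0 = 0 := rfl

@[simp] lemma Mz_succ (a : ℕ → ℂ) (k : ℕ) : Mz a (k + 1) = a k := rfl

lemma Mz_add (a b : ℕ → ℂ) : Mz (a + b) = Mz a + Mz b := by
  ext (_ | k) <;> simp

lemma Mz_single (k : ℕ) (c : ℂ) : Mz (Pi.single k c) = Pi.single (k + 1) c := by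
  ext (_ | j) <;> simp [Pi.single_apply]

lemma tsum_norm_sq_Mz (a : ℕ → ℂ) : ∑' k, ‖Mz a k‖ ^ 2 = ∑' k, ‖a k‖ ^ 2 :=
  tsum_eq_tsum_succ_of_eq_zero (by simp)

end Mz

section Dirichlet

lemma summable_norm_sq_of_DMem {a : ℕ → ℂ} (ha : DMem a) : Summable fun k => ‖a k‖ ^ 2 :=
  ha.of_nonneg_of_le (fun _ => by positivity) fun k =>
    le_mul_of_one_le_left (by positivity) (by simp)

lemma DMem_congr_norm {a b : ℕ → ℂ} (h : ∀ k, ‖b k‖ = ‖a k‖) : DMem b ↔ DMem a := by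
  simp only [DMem, h]

lemma Dnorm2_congr_norm {a b : ℕ → ℂ} (h : ∀ k, ‖b k‖ = ‖a k‖) : Dnorm2 b = Dnorm2 a := by
  simp only [Dnorm2, h]

lemma Dnorm2_Mz_summand (a : ℕ → ℂ) (k : ℕ) :
    (↑(k + 1) + 1 : ℝ) * ‖Mz a (k + 1)‖ ^ 2 = (k + 1 : ℝ) * ‖a k‖ ^ 2 + ‖a k‖ ^ 2 := by
  push_cast; simp only [Mz_succ]; ring

lemma DMem.Mz {a : ℕ → ℂ} (ha : DMem a) : DMem (Mz a) := by
  refine (summable_nat_add_iff 1).mp ?_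
  simpa only [Dnorm2_Mz_summand] using ha.add (summable_norm_sq_of_DMem ha)

lemma Dnorm2_Mz {a : ℕ → ℂ} (ha : DMem a) : Dnorm2 (Mz a) = Dnorm2 a + ∑' k, ‖a k‖ ^ 2 := by
  rw [Dnorm2, tsum_eq_tsum_succ_of_eq_zero (by simp)]
  simp only [Dnorm2_Mz_summand]
  exact ha.tsum_add (summable_norm_sq_of_DMem ha)

lemma Dnorm2_eq_sum {a : ℕ → ℂ} (s : Finset ℕ) (h : ∀ k ∉ s, a k = 0) :
    Dnorm2 a = ∑ k ∈ s, (k + 1 : ℝ) * ‖a k‖ ^ 2 :=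
  tsum_eq_sum fun k hk => by simp [h k hk]

lemma DMem_single (k : ℕ) (c : ℂ) : DMem (Pi.single k c) :=
  summable_of_ne_finset_zero (s := {k}) fun j hj => by simp_all

lemma Dnorm2_single (k : ℕ) (c : ℂ) : Dnorm2 (Pi.single k c) = (k + 1) * ‖c‖ ^ 2 := by
  rw [Dnorm2_eq_sum {k} fun j hj => by simp_all]
  simp

lemma Dnorm2_single_add_single {k l : ℕ} (hkl : k ≠ l) (c d : ℂ) :
    Dnorm2 (Pi.single k c + Pi.single l d) = (k + 1) * ‖c‖ ^ 2 + (l + 1) * ‖d‖ ^ 2 := by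
  rw [Dnorm2_eq_sum {k, l} fun j hj => by simp_all, sum_pair hkl]
  simp [hkl, hkl.symm]

end Dirichlet

lemma norm_one_add_sq (α : ℂ) : ‖1 + α‖ ^ 2 = 1 + 2 * α.re + ‖α‖ ^ 2 := by
  simp only [Complex.sq_norm, Complex.normSq_apply, Complex.add_re, Complex.add_im,
    Complex.one_re, Complex.one_im]
  ring

lemma norm_one_add_eq_one_iff (α : ℂ) : ‖1 + α‖ = 1 ↔ ‖α‖ ^ 2 = -2 * α.re := by
  rw [← pow_eq_one_iff_of_nonneg (norm_nonneg _) two_ne_zero, norm_one_add_sq]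
  constructor <;> intro h <;> linarith

/-- `M_z + α zⁿ ⊗ 1`, since `⟨a, 1⟩_D = a 0`. -/
def perturbedShift (α : ℂ) (n : ℕ) (a : ℕ → ℂ) : ℕ → ℂ := Mz a + Pi.single n (a 0 * α)

section perturbedShift

variable {α : ℂ}

lemma norm_perturbedShift_one_apply (hα : ‖1 + α‖ = 1) (a : ℕ → ℂ) (k : ℕ) :
    ‖perturbedShift α 1 a k‖ = ‖Mz a k‖ := by
  rcases k with _ | _ | k
  · simp [perturbedShift]
  · simp [perturbedShift, ← mul_one_add, hα]
  · simp [perturbedShift]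

theorem perturbedShift_one_isTwoIsometry (hα : ‖1 + α‖ = 1) {a : ℕ → ℂ} (ha : DMem a) :
    Dnorm2 a - 2 * Dnorm2 (perturbedShift α 1 a)
      + Dnorm2 (perturbedShift α 1 (perturbedShift α 1 a)) = 0 := by
  have h₁ := norm_perturbedShift_one_apply hα a
  have h₂ := norm_perturbedShift_one_apply hα (perturbedShift α 1 a)
  rw [Dnorm2_congr_norm h₂, Dnorm2_Mz ((DMem_congr_norm h₁).mpr ha.Mz), Dnorm2_congr_norm h₁,
    Dnorm2_Mz ha, tsum_congr fun k => congrArg (· ^ 2) (h₁ k), tsum_norm_sq_Mz]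
  ring

variable (α) (n : ℕ)

lemma perturbedShift_single_zero :
    perturbedShift α n (Pi.single 0 1) = Pi.single 1 1 + Pi.single n α := by
  simp [perturbedShift, Mz_single]

lemma perturbedShift_single_one_add_single :
    perturbedShift α n (Pi.single 1 1 + Pi.single n α)
      = Pi.single 2 1 + Pi.single (n + 1) α + Pi.single n ((Pi.single n α : ℕ → ℂ) 0 * α) := by
  simp [perturbedShift, Mz_add, Mz_single]

lemma defect_perturbedShift_zero_single_zero :
    Dnorm2 (Pi.single 0 1) - 2 * Dnorm2 (perturbedShift α 0 (Pi.single 0 1))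
      + Dnorm2 (perturbedShift α 0 (perturbedShift α 0 (Pi.single 0 1))) = ‖α‖ ^ 4 := by
  rw [perturbedShift_single_zero, perturbedShift_single_one_add_single, Dnorm2_single,
    Dnorm2_single_add_single one_ne_zero,
    Dnorm2_eq_sum (range 3) fun j hj => by simp [Pi.single_apply]; grind]
  simp [sum_range_succ]
  ring

lemma defect_perturbedShift_one_single_zero :
    Dnorm2 (Pi.single 0 1) - 2 * Dnorm2 (perturbedShift α 1 (Pi.single 0 1))
      + Dnorm2 (perturbedShift α 1 (perturbedShift α 1 (Pi.single 0 1))) = 1 - ‖1 + α‖ ^ 2 := by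
  rw [perturbedShift_single_zero, perturbedShift_single_one_add_single, ← Pi.single_add,
    ← Pi.single_add]
  simp [Dnorm2_single]
  ring

lemma defect_perturbedShift_single_zero_of_two_le (hn : 2 ≤ n) :
    Dnorm2 (Pi.single 0 1) - 2 * Dnorm2 (perturbedShift α n (Pi.single 0 1))
      + Dnorm2 (perturbedShift α n (perturbedShift α n (Pi.single 0 1))) = -n * ‖α‖ ^ 2 := by
  rw [perturbedShift_single_zero, perturbedShift_single_one_add_single,
    Pi.single_eq_of_ne (by omega), zero_mul, Pi.single_zero, add_zero,
    Dnorm2_single_add_single (by omega), Dnorm2_single_add_single (by omega), Dnorm2_single]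
  push_cast
  ring

end perturbedShift

theorem stmt_17 (α : ℂ) (hα : α ≠ 0) (n : ℕ)
    (A : (ℕ → ℂ) → (ℕ → ℂ))
    (hA : ∀ a : ℕ → ℂ, A a = fun j => Mz a j + a 0 * (if j = n then α else 0)) :
    (∀ a : ℕ → ℂ, DMem a →
        Dnorm2 a - 2 * Dnorm2 (A a) + Dnorm2 (A (A a)) = 0) ↔
      (n = 1 ∧ ‖α‖ ^ 2 = -2 * α.re) := by
  obtain rfl : A = perturbedShift α n := by
    ext a j
    simp [hA, perturbedShift, Pi.single_apply]
  rw [← norm_one_add_eq_one_iff]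
  refine ⟨fun h => ?_, fun ⟨hn, hα₁⟩ a ha => hn ▸ perturbedShift_one_isTwoIsometry hα₁ ha⟩
  have h₀ := h _ (DMem_single 0 1)
  have hα₀ : 0 < ‖α‖ := norm_pos_iff.mpr hα
  rcases n with _ | _ | n
  · rw [defect_perturbedShift_zero_single_zero] at h₀
    exact absurd h₀ (by positivity)
  · rw [defect_perturbedShift_one_single_zero, sub_eq_zero, eq_comm,
      pow_eq_one_iff_of_nonneg (norm_nonneg _) two_ne_zero] at h₀
    exact ⟨rfl, h₀⟩
  · rw [defect_perturbedShift_single_zero_of_two_le α _ (by omega)] at h₀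
    exact absurd h₀ (by push_cast; nlinarith)
end

section
/- On the Hardy space H²(D²) of the bidisc, the operator M̃ := M_{z₁} + (−z₁² + z₂) ⊗ z₁ is a 2-isometry, i.e., ‖f‖² − 2‖M̃f‖² + ‖M̃²f‖² = 0 for all f ∈ H²(D²). -/
/-- The squared Hardy-space norm on the bidisc, on coefficient arrays. -/
noncomputable def H2norm2 (a : ℕ × ℕ → ℂ) : ℝ := ∑' p : ℕ × ℕ, ‖a p‖ ^ 2

/-- Membership in `H²(𝔻²)`. -/
def H2Mem (a : ℕ × ℕ → ℂ) : Prop := Summable fun p : ℕ × ℕ => ‖a p‖ ^ 2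

/-- Multiplication by `z₁` on coefficient arrays. -/
def Mz1 (a : ℕ × ℕ → ℂ) : ℕ × ℕ → ℂ :=
  fun p => if p.1 = 0 then 0 else a (p.1 - 1, p.2)

/-- Coefficients of `-z₁² + z₂`. -/
def q : ℕ × ℕ → ℂ := fun p => if p = (2, 0) then -1 else if p = (0, 1) then 1 else 0

/-- `M̃ = M_{z₁} + (-z₁² + z₂) ⊗ z₁`: note `⟨f, z₁⟩ = a(1,0)`. -/
def Mt (a : ℕ × ℕ → ℂ) : ℕ × ℕ → ℂ := fun p => Mz1 a p + a (1, 0) * q p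

/-- Pointwise, `Mt a` is a rearrangement of `Mz1 a` by the swap of `(2,0)` and `(0,1)`. -/
lemma mt_norm_eq (a : ℕ × ℕ → ℂ) (p : ℕ × ℕ) :
    ‖Mt a p‖ = ‖Mz1 a (Equiv.swap ((2, 0) : ℕ × ℕ) (0, 1) p)‖ := by
  by_cases h1 : p = (2, 0)
  · subst h1
    rw [Equiv.swap_apply_left]
    simp [Mt, Mz1, q]
  by_cases h2 : p = (0, 1)
  · subst h2
    rw [Equiv.swap_apply_right]
    simp [Mt, Mz1, q]
  · rw [Equiv.swap_apply_of_ne_of_ne h1 h2]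
    simp [Mt, q, h1, h2]

/-- The shift injection on indices. -/
def ι : ℕ × ℕ → ℕ × ℕ := fun p => (p.1 + 1, p.2)

lemma ι_inj : Function.Injective ι := by
  intro p q h
  simp only [ι, Prod.ext_iff] at h
  exact Prod.ext (by omega) h.2

lemma mz1_comp (a : ℕ × ℕ → ℂ) :
    (fun p : ℕ × ℕ => ‖Mz1 a p‖ ^ 2) ∘ ι = fun p : ℕ × ℕ => ‖a p‖ ^ 2 := by
  funext p
  simp [ι, Mz1]

lemma mz1_support (a : ℕ × ℕ → ℂ) :
    Function.support (fun p : ℕ × ℕ => ‖Mz1 a p‖ ^ 2) ⊆ Set.range ι := by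
  intro p hp
  rcases p with ⟨m, n⟩
  rcases m with _ | m
  · simp [Mz1, Function.mem_support] at hp
  · exact ⟨(m, n), rfl⟩

lemma mz1_zero_off_range (a : ℕ × ℕ → ℂ) :
    ∀ p ∉ Set.range ι, ‖Mz1 a p‖ ^ 2 = 0 := by
  intro p hp
  rcases p with ⟨m, n⟩
  rcases m with _ | m
  · simp [Mz1]
  · exact absurd ⟨(m, n), rfl⟩ hp

set_option maxHeartbeats 1000000 in
lemma mt_mem {a : ℕ × ℕ → ℂ} (ha : H2Mem a) : H2Mem (Mt a) := by
  have h1 : Summable ((fun p : ℕ × ℕ => ‖Mz1 a p‖ ^ 2) ∘ ι) := by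
    rw [mz1_comp]; exact ha
  have h2 : Summable (fun p : ℕ × ℕ => ‖Mz1 a p‖ ^ 2) :=
    (ι_inj.summable_iff (mz1_zero_off_range a)).mp h1
  have h3 : Summable (fun p : ℕ × ℕ =>
      ‖Mz1 a (Equiv.swap ((2, 0) : ℕ × ℕ) (0, 1) p)‖ ^ 2) :=
    (Equiv.swap ((2, 0) : ℕ × ℕ) (0, 1)).summable_iff.mpr h2
  have he : (fun p : ℕ × ℕ => ‖Mt a p‖ ^ 2)
      = fun p : ℕ × ℕ => ‖Mz1 a (Equiv.swap ((2, 0) : ℕ × ℕ) (0, 1) p)‖ ^ 2 :=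
    funext fun p => by rw [mt_norm_eq]
  show Summable fun p : ℕ × ℕ => ‖Mt a p‖ ^ 2
  rw [he]
  exact h3

set_option maxHeartbeats 1000000 in
lemma mt_norm2 (a : ℕ × ℕ → ℂ) : H2norm2 (Mt a) = H2norm2 a := by
  unfold H2norm2
  calc ∑' p : ℕ × ℕ, ‖Mt a p‖ ^ 2
      = ∑' p : ℕ × ℕ, (fun r : ℕ × ℕ => ‖Mz1 a r‖ ^ 2)
          (Equiv.swap ((2, 0) : ℕ × ℕ) (0, 1) p) := by
        congr 1; funext p; simp only []; rw [mt_norm_eq]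
    _ = ∑' p : ℕ × ℕ, ‖Mz1 a p‖ ^ 2 :=
        Equiv.tsum_eq (Equiv.swap ((2, 0) : ℕ × ℕ) (0, 1))
          (fun r : ℕ × ℕ => ‖Mz1 a r‖ ^ 2)
    _ = ∑' p : ℕ × ℕ, ‖a p‖ ^ 2 := by
        rw [← ι_inj.tsum_eq (mz1_support a)]
        exact tsum_congr fun p => by simp [ι, Mz1]

theorem stmt_19 :
    ∀ a : ℕ × ℕ → ℂ, H2Mem a →
      H2norm2 a - 2 * H2norm2 (Mt a) + H2norm2 (Mt (Mt a)) = 0 := by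
  intro a ha
  rw [mt_norm2 (Mt a), mt_norm2 a]
  ring
end
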